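/- arXiv:1402.2950 — 2 statements merged into one kernel-verified Lean document; each statement's English description precedes it below -/
import Mathlib

section
/- For x in ℝ^n with x ≠ 0, and for any α ∈ ℝ and nonnegative integer j, the j-th power of the Laplacian applied to |x|^(-2α) satisfies L^j |x|^(-2α) = 2^(2j) (α)_j (α + 1 - n/2)_j |x|^(-2(α+j)), where (a)_j = a(a+1)···(a+j-1) is the Pochhammer symbol and L = ∂₁² + ... + ∂ₙ² is the Laplacian. -/
/-!
For `p : ℝ` the radial function `‖x‖ ^ p` is an eigenfunction of the Laplacian up to a shift of
the exponent: `L ‖x‖ ^ p = p (p + n - 2) ‖x‖ ^ (p - 2)` away from the origin. With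
`p = -2(α + k)` the factor is `4 (α + k) (α + k + 1 - n/2)`, so iterating `j` times produces the
two Pochhammer symbols. Since `L` only sees a function near the point, each step of the induction
uses the previous identity on the open set `x ≠ 0`.
-/

open Finset

/-- The Euclidean Laplacian `L = ∂₁² + ⋯ + ∂ₙ²` acting on functions on `ℝⁿ`. -/
noncomputable def lap (n : ℕ) (f : EuclideanSpace ℝ (Fin n) → ℝ)
    (x : EuclideanSpace ℝ (Fin n)) : ℝ :=
  ∑ i, fderiv ℝ (fun y => fderiv ℝ f y (EuclideanSpace.single i 1)) x
    (EuclideanSpace.single i 1)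

/-- The Pochhammer symbol `(a)_j = a (a+1) ⋯ (a+j-1)`. -/
noncomputable def poch (a : ℝ) (j : ℕ) : ℝ := ∏ i ∈ Finset.range j, (a + i)

open Filter Topology

open scoped RealInnerProductSpace

section NormRpow

variable {E : Type*} [NormedAddCommGroup E] [InnerProductSpace ℝ E]

theorem hasFDerivAt_norm_rpow_of_ne_zero (p : ℝ) {x : E} (hx : x ≠ 0) :
    HasFDerivAt (fun y : E => ‖y‖ ^ p) ((p * ‖x‖ ^ (p - 2)) • innerSL ℝ x) x := by
  apply HasStrictFDerivAt.hasFDerivAt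
  convert! (hasStrictFDerivAt_norm_sq x).rpow_const (p := p / 2) (by simp [hx]) using 0
  simp_rw [← Real.rpow_natCast_mul (norm_nonneg _), ← Nat.cast_smul_eq_nsmul ℝ, smul_smul]
  ring_nf

theorem fderiv_norm_rpow_apply (p : ℝ) {x : E} (hx : x ≠ 0) (v : E) :
    fderiv ℝ (fun y : E => ‖y‖ ^ p) x v = p * ‖x‖ ^ (p - 2) * ⟪x, v⟫ := by
  simp [(hasFDerivAt_norm_rpow_of_ne_zero p hx).fderiv]

theorem fderiv_fderiv_norm_rpow_apply (p : ℝ) {x : E} (hx : x ≠ 0) (v : E) :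
    fderiv ℝ (fun y => fderiv ℝ (fun z : E => ‖z‖ ^ p) y v) x v
      = p * ((p - 2) * ‖x‖ ^ (p - 4) * ⟪x, v⟫ ^ 2 + ‖x‖ ^ (p - 2) * ‖v‖ ^ 2) := by
  have hnear : (fun y => fderiv ℝ (fun z : E => ‖z‖ ^ p) y v)
      =ᶠ[𝓝 x] fun y => p * (‖y‖ ^ (p - 2) * ⟪v, y⟫) :=
    (eventually_ne_nhds hx).mono fun y hy => by
      dsimp only
      rw [fderiv_norm_rpow_apply p hy, real_inner_comm, mul_assoc]
  have hderiv : HasFDerivAt (fun y : E => p * (‖y‖ ^ (p - 2) * ⟪v, y⟫)) _ x :=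
    ((hasFDerivAt_norm_rpow_of_ne_zero (p - 2) hx).mul (innerSL ℝ v).hasFDerivAt).const_mul p
  rw [hnear.fderiv_eq, hderiv.fderiv]
  simp only [smul_apply, add_apply, innerSL_apply_apply, real_inner_self_eq_norm_sq,
    real_inner_comm v x]
  ring_nf

end NormRpow

section Laplacian

variable {n : ℕ}

theorem Filter.EventuallyEq.lap_eq {f g : EuclideanSpace ℝ (Fin n) → ℝ}
    {x : EuclideanSpace ℝ (Fin n)} (h : f =ᶠ[𝓝 x] g) : lap n f x = lap n g x := by
  refine Finset.sum_congr rfl fun i _ => ?_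
  have hderiv : (fun y => fderiv ℝ f y (EuclideanSpace.single i 1))
      =ᶠ[𝓝 x] fun y => fderiv ℝ g y (EuclideanSpace.single i 1) :=
    (h.fderiv (𝕜 := ℝ)).mono fun y hy => by dsimp only; rw [hy]
  rw [hderiv.fderiv_eq]

theorem lap_const_mul (c : ℝ) (f : EuclideanSpace ℝ (Fin n) → ℝ)
    (x : EuclideanSpace ℝ (Fin n)) : lap n (fun y => c * f y) x = c * lap n f x := by
  have hpartial (v : EuclideanSpace ℝ (Fin n)) :
      (fun y => fderiv ℝ (fun y => c * f y) y v) = c • fun y => fderiv ℝ f y v := by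
    ext y
    rw [show (fun y => c * f y) = c • f from rfl, fderiv_const_smul_field]
    rfl
  simp only [lap, hpartial, fderiv_const_smul_field, Pi.smul_apply, smul_apply, smul_eq_mul,
    Finset.mul_sum]

theorem lap_norm_rpow (p : ℝ) {x : EuclideanSpace ℝ (Fin n)} (hx : x ≠ 0) :
    lap n (fun y => ‖y‖ ^ p) x = p * (p + n - 2) * ‖x‖ ^ (p - 2) := by
  have hpow : ‖x‖ ^ (p - 4) * ‖x‖ ^ 2 = ‖x‖ ^ (p - 2) := by
    rw [← Real.rpow_natCast, ← Real.rpow_add (norm_pos_iff.2 hx)]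
    congr 1
    ring
  simp only [lap, fderiv_fderiv_norm_rpow_apply p hx, EuclideanSpace.inner_single_right,
    PiLp.norm_single, norm_one, one_pow, mul_one, one_mul, Finset.sum_add_distrib,
    ← Finset.mul_sum, conj_trivial, ← EuclideanSpace.real_norm_sq_eq, Finset.sum_const,
    Finset.card_univ, Fintype.card_fin, nsmul_eq_mul]
  linear_combination p * (p - 2) * hpow

end Laplacian

theorem poch_succ (a : ℝ) (j : ℕ) : poch a (j + 1) = poch a j * (a + j) :=
  Finset.prod_range_succ _ _

/-- Bernstein–Sato type identity:
`L^j |x|^{-2α} = 2^{2j} (α)_j (α + 1 - n/2)_j |x|^{-2(α+j)}` for `x ≠ 0`. -/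
theorem laplacian_pow_rpow (n : ℕ) (α : ℝ) (j : ℕ)
    (x : EuclideanSpace ℝ (Fin n)) (hx : x ≠ 0) :
    (lap n)^[j] (fun y => ‖y‖ ^ (-(2 * α))) x
      = 2 ^ (2 * j) * poch α j * poch (α + 1 - n / 2) j
        * ‖x‖ ^ (-(2 * (α + j))) := by
  induction j generalizing x with
  | zero => simp [poch]
  | succ j ih =>
    have hnear : (lap n)^[j] (fun y => ‖y‖ ^ (-(2 * α))) =ᶠ[𝓝 x] fun y =>
        2 ^ (2 * j) * poch α j * poch (α + 1 - n / 2) j * ‖y‖ ^ (-(2 * (α + j))) :=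
      (eventually_ne_nhds hx).mono ih
    rw [Function.iterate_succ_apply', hnear.lap_eq, lap_const_mul, lap_norm_rpow _ hx,
      poch_succ, poch_succ, show -(2 * (α + j)) - 2 = -(2 * (α + (j + 1 : ℕ))) by push_cast; ring]
    push_cast
    ring
end

section
/- Let d ≥ 1 and a, b > 0 with a + b < d, a < d, b < d. Then for every unit vector u ∈ ℝ^d, the function v ↦ |u - v|^{a - d} |v|^{b - d} is integrable on ℝ^d, and its integral equals π^{d/2} Γ(a/2) Γ(b/2) Γ((d - a - b)/2) / (Γ((d-a)/2) Γ((d-b)/2) Γ((a+b)/2)). -/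
/-!
Subordination: for `x > 0`, `Γ(c) x^{-c} = ∫₀^∞ t^{c-1} e^{-tx} dt`. Applied to `|u - v|²` and
`|v|²` this writes the integrand as a double integral over `(t, s)` of Gaussians in `v`. Exchanging
the order, the `v`-integral is Gaussian after completing the square (using `|u| = 1`),
`t|u - v|² + s|v|² = (t + s)|v - t/(t+s) u|² + ts/(t+s)`, and equals
`(π/(t+s))^{d/2} e^{-ts/(t+s)}`. The substitution `s = tσ` then splits off a Gamma integral in
`t`, and what remains is the Beta integral `∫₀^∞ σ^{p-1} (1+σ)^{-p-q} dσ = Γ(p)Γ(q)/Γ(p+q)`,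
itself evaluated by subordination. Everything is done with lower Lebesgue integrals, so that
Tonelli applies without integrability side conditions; integrability of the integrand comes out
at the end from the finiteness of the value.
-/

open MeasureTheory Real Set
open scoped ENNReal

lemma lintegral_ofReal_eq_of_integral_eq {α : Type*} [MeasurableSpace α] {μ : Measure α}
    {f : α → ℝ} {r : ℝ} (hf : 0 ≤ᵐ[μ] f) (h : ∫ x, f x ∂μ = r) (hr : 0 < r) :
    ∫⁻ x, ENNReal.ofReal (f x) ∂μ = ENNReal.ofReal r := by
  have hint : Integrable f μ := Integrable.of_integral_ne_zero (h ▸ hr.ne')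
  rw [← ofReal_integral_eq_lintegral_ofReal hint hf, h]

lemma integrable_and_integral_eq_of_lintegral_ofReal_eq {α : Type*} [MeasurableSpace α]
    {μ : Measure α} {f : α → ℝ} {r : ℝ} (hf : 0 ≤ᵐ[μ] f) (hfm : AEStronglyMeasurable f μ)
    (h : ∫⁻ x, ENNReal.ofReal (f x) ∂μ = ENNReal.ofReal r) (hr : 0 ≤ r) :
    Integrable f μ ∧ ∫ x, f x ∂μ = r :=
  ⟨⟨hfm, by rw [hasFiniteIntegral_iff_ofReal hf, h]; exact ENNReal.ofReal_lt_top⟩,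
    by rw [integral_eq_lintegral_of_nonneg_ae hf hfm, h, ENNReal.toReal_ofReal hr]⟩

lemma lintegral_ofReal_const_mul {α : Type*} [MeasurableSpace α] {μ : Measure α} (f : α → ℝ)
    {c : ℝ} (hc : 0 ≤ c) :
    ∫⁻ x, ENNReal.ofReal (c * f x) ∂μ = ENNReal.ofReal c * ∫⁻ x, ENNReal.ofReal (f x) ∂μ := by
  simp_rw [ENNReal.ofReal_mul hc]
  exact lintegral_const_mul' _ _ ENNReal.ofReal_ne_top

lemma lintegral_Ioi_eq_lintegral_Ioi_comp_mul_left (f : ℝ → ℝ≥0∞) {c : ℝ} (hc : 0 < c) :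
    ∫⁻ s in Ioi 0, f s = ∫⁻ σ in Ioi 0, ENNReal.ofReal c * f (c * σ) := by
  have h := lintegral_image_eq_lintegral_abs_deriv_mul (measurableSet_Ioi (a := (0 : ℝ)))
    (fun σ _ => ((hasDerivAt_id σ).const_mul c).hasDerivWithinAt)
    (mul_right_injective₀ hc.ne').injOn f
  simpa [image_mul_left_Ioi hc, abs_of_pos hc] using h

lemma lintegral_rpow_mul_exp_neg_mul_Ioi {c r : ℝ} (hc : 0 < c) (hr : 0 < r) :
    ∫⁻ t in Ioi 0, ENNReal.ofReal (t ^ (c - 1) * exp (-(r * t)))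
      = ENNReal.ofReal (Gamma c * r ^ (-c)) := by
  refine lintegral_ofReal_eq_of_integral_eq ?_ ?_ (by positivity)
  · filter_upwards [ae_restrict_mem measurableSet_Ioi] with t ht
    exact mul_nonneg (rpow_nonneg (le_of_lt ht) _) (exp_nonneg _)
  · rw [integral_rpow_mul_exp_neg_mul_Ioi hc hr, one_div, inv_rpow hr.le, rpow_neg hr.le, mul_comm]

lemma lintegral_Ioi_lintegral_Ioi_rpow_mul_exp_neg_mul_mul {α β x y : ℝ} (hα : 0 < α)
    (hβ : 0 < β) (hx : 0 < x) (hy : 0 < y) :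
    ∫⁻ t in Ioi 0, ∫⁻ s in Ioi 0,
        ENNReal.ofReal (t ^ (α - 1) * s ^ (β - 1) * (exp (-(t * x)) * exp (-(s * y))))
      = ENNReal.ofReal (Gamma α * x ^ (-α) * (Gamma β * y ^ (-β))) := by
  have hsplit : ∀ t s : ℝ, t ^ (α - 1) * s ^ (β - 1) * (exp (-(t * x)) * exp (-(s * y)))
      = t ^ (α - 1) * exp (-(x * t)) * (s ^ (β - 1) * exp (-(y * s))) := by
    intro t s
    rw [mul_comm t x, mul_comm s y]
    ring
  simp_rw [hsplit]
  calc ∫⁻ t in Ioi 0, ∫⁻ s in Ioi 0,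
        ENNReal.ofReal (t ^ (α - 1) * exp (-(x * t)) * (s ^ (β - 1) * exp (-(y * s))))
      = ∫⁻ t in Ioi 0, ENNReal.ofReal (t ^ (α - 1) * exp (-(x * t))) *
          ENNReal.ofReal (Gamma β * y ^ (-β)) := by
        refine setLIntegral_congr_fun measurableSet_Ioi fun t (ht : 0 < t) => ?_
        rw [lintegral_ofReal_const_mul _ (by positivity), lintegral_rpow_mul_exp_neg_mul_Ioi hβ hy]
    _ = _ := by
        rw [lintegral_mul_const' _ _ ENNReal.ofReal_ne_top,
          lintegral_rpow_mul_exp_neg_mul_Ioi hα hx,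
          ← ENNReal.ofReal_mul (by positivity)]

lemma lintegral_rpow_mul_one_add_rpow_neg_Ioi {p q : ℝ} (hp : 0 < p) (hq : 0 < q) :
    ∫⁻ σ in Ioi 0, ENNReal.ofReal (σ ^ (p - 1) * (1 + σ) ^ (-(p + q)))
      = ENNReal.ofReal (Gamma p * Gamma q / Gamma (p + q)) := by
  have hpq : 0 < p + q := add_pos hp hq
  have hΓ : 0 < Gamma (p + q) := Gamma_pos_of_pos hpq
  rw [ENNReal.ofReal_div_of_pos hΓ, ENNReal.eq_div_iff (by simpa using hΓ) ENNReal.ofReal_ne_top]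
  calc ENNReal.ofReal (Gamma (p + q)) *
        ∫⁻ σ in Ioi 0, ENNReal.ofReal (σ ^ (p - 1) * (1 + σ) ^ (-(p + q)))
      = ∫⁻ σ in Ioi 0, ∫⁻ t in Ioi 0,
          ENNReal.ofReal (σ ^ (p - 1) * (t ^ (p + q - 1) * exp (-((1 + σ) * t)))) := by
        rw [← lintegral_const_mul' _ _ ENNReal.ofReal_ne_top]
        refine setLIntegral_congr_fun measurableSet_Ioi fun σ (hσ : 0 < σ) => ?_
        rw [lintegral_ofReal_const_mul _ (rpow_nonneg hσ.le _),
          lintegral_rpow_mul_exp_neg_mul_Ioi hpq (by linarith), ← ENNReal.ofReal_mul hΓ.le,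
          ← ENNReal.ofReal_mul (rpow_nonneg hσ.le _)]
        congr 1; ring
    _ = ∫⁻ t in Ioi 0, ∫⁻ σ in Ioi 0,
          ENNReal.ofReal (σ ^ (p - 1) * (t ^ (p + q - 1) * exp (-((1 + σ) * t)))) :=
        lintegral_lintegral_swap (by apply Measurable.aemeasurable; fun_prop)
    _ = ∫⁻ t in Ioi 0,
          ENNReal.ofReal (Gamma p) * ENNReal.ofReal (t ^ (q - 1) * exp (-(1 * t))) := by
        refine setLIntegral_congr_fun measurableSet_Ioi fun t (ht : 0 < t) => ?_
        have hsplit : ∀ σ, σ ^ (p - 1) * (t ^ (p + q - 1) * exp (-((1 + σ) * t)))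
            = t ^ (p + q - 1) * exp (-t) * (σ ^ (p - 1) * exp (-(t * σ))) := by
          intro σ
          rw [show -((1 + σ) * t) = -t + -(t * σ) by ring, exp_add]
          ring
        simp_rw [hsplit]
        rw [lintegral_ofReal_const_mul _ (by positivity), lintegral_rpow_mul_exp_neg_mul_Ioi hp ht,
          ← ENNReal.ofReal_mul (by positivity), ← ENNReal.ofReal_mul (Gamma_pos_of_pos hp).le]
        congr 1
        rw [one_mul, show q - 1 = p + q - 1 + -p by ring, rpow_add ht]
        ring
    _ = ENNReal.ofReal (Gamma p * Gamma q) := by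
        rw [lintegral_const_mul' _ _ ENNReal.ofReal_ne_top,
          lintegral_rpow_mul_exp_neg_mul_Ioi hq one_pos,
          one_rpow, mul_one, ← ENNReal.ofReal_mul (Gamma_pos_of_pos hp).le]

lemma lintegral_Ioi_rpow_mul_rpow_mul_exp_neg_mul_div_add {α β D t : ℝ} (ht : 0 < t) :
    ∫⁻ s in Ioi 0,
        ENNReal.ofReal (t ^ (α - 1) * s ^ (β - 1) * ((t + s) ^ (-D) * exp (-(t * s / (t + s)))))
      = ∫⁻ σ in Ioi 0, ENNReal.ofReal (σ ^ (β - 1) * (1 + σ) ^ (-D) *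
          (t ^ (α + β - D - 1) * exp (-(σ / (1 + σ) * t)))) := by
  rw [lintegral_Ioi_eq_lintegral_Ioi_comp_mul_left _ ht]
  refine setLIntegral_congr_fun measurableSet_Ioi fun σ (hσ : 0 < σ) => ?_
  have h1σ : 0 < 1 + σ := by linarith
  have hpow : t * (t ^ (α - 1) * (t * σ) ^ (β - 1) * (t * (1 + σ)) ^ (-D))
      = t ^ (α + β - D - 1) * (σ ^ (β - 1) * (1 + σ) ^ (-D)) := by
    rw [mul_rpow ht.le hσ.le, mul_rpow ht.le h1σ.le,
      show α + β - D - 1 = 1 + (α - 1) + (β - 1) + -D by ring, rpow_add ht, rpow_add ht,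
      rpow_add ht, rpow_one]
    ring
  rw [← ENNReal.ofReal_mul ht.le, show t + t * σ = t * (1 + σ) by ring,
    show t * (t * σ) / (t * (1 + σ)) = σ / (1 + σ) * t by field_simp]
  calc ENNReal.ofReal (t * (t ^ (α - 1) * (t * σ) ^ (β - 1) *
        ((t * (1 + σ)) ^ (-D) * exp (-(σ / (1 + σ) * t)))))
      = ENNReal.ofReal (t * (t ^ (α - 1) * (t * σ) ^ (β - 1) * (t * (1 + σ)) ^ (-D)) *
          exp (-(σ / (1 + σ) * t))) := by congr 1; ring
    _ = _ := by rw [hpow]; congr 1; ring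

lemma lintegral_Ioi_lintegral_Ioi_rpow_mul_rpow_mul_exp_neg_mul_div_add {α β D : ℝ}
    (hγ : 0 < α + β - D) (hα : 0 < D - α) (hβ : 0 < D - β) :
    ∫⁻ t in Ioi 0, ∫⁻ s in Ioi 0,
        ENNReal.ofReal (t ^ (α - 1) * s ^ (β - 1) * ((t + s) ^ (-D) * exp (-(t * s / (t + s)))))
      = ENNReal.ofReal (Gamma (α + β - D) *
          (Gamma (D - α) * Gamma (D - β) / Gamma (D - α + (D - β)))) := by
  calc ∫⁻ t in Ioi 0, ∫⁻ s in Ioi 0,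
        ENNReal.ofReal (t ^ (α - 1) * s ^ (β - 1) * ((t + s) ^ (-D) * exp (-(t * s / (t + s)))))
      = ∫⁻ t in Ioi 0, ∫⁻ σ in Ioi 0, ENNReal.ofReal (σ ^ (β - 1) * (1 + σ) ^ (-D) *
          (t ^ (α + β - D - 1) * exp (-(σ / (1 + σ) * t)))) :=
        setLIntegral_congr_fun measurableSet_Ioi fun t (ht : 0 < t) =>
          lintegral_Ioi_rpow_mul_rpow_mul_exp_neg_mul_div_add ht
    _ = ∫⁻ σ in Ioi 0, ∫⁻ t in Ioi 0, ENNReal.ofReal (σ ^ (β - 1) * (1 + σ) ^ (-D) *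
          (t ^ (α + β - D - 1) * exp (-(σ / (1 + σ) * t)))) :=
        lintegral_lintegral_swap (by apply Measurable.aemeasurable; fun_prop)
    _ = ∫⁻ σ in Ioi 0, ENNReal.ofReal (Gamma (α + β - D)) *
          ENNReal.ofReal (σ ^ (D - α - 1) * (1 + σ) ^ (-(D - α + (D - β)))) := by
        refine setLIntegral_congr_fun measurableSet_Ioi fun σ (hσ : 0 < σ) => ?_
        have h1σ : 0 < 1 + σ := by linarith
        rw [lintegral_ofReal_const_mul _ (by positivity), lintegral_rpow_mul_exp_neg_mul_Ioi hγ
          (by positivity), ← ENNReal.ofReal_mul (by positivity),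
          ← ENNReal.ofReal_mul (Gamma_pos_of_pos hγ).le]
        congr 1
        rw [rpow_neg (div_pos hσ h1σ).le, div_rpow hσ.le h1σ.le, inv_div,
          show β - 1 = D - α - 1 + (α + β - D) by ring, rpow_add hσ,
          show -(D - α + (D - β)) = -D + (α + β - D) by ring, rpow_add h1σ]
        field_simp
    _ = _ := by
        rw [lintegral_const_mul' _ _ ENNReal.ofReal_ne_top,
          lintegral_rpow_mul_one_add_rpow_neg_Ioi hα hβ,
          ← ENNReal.ofReal_mul (Gamma_pos_of_pos hγ).le]

lemma lintegral_exp_neg_mul_norm_sq {V : Type*} [NormedAddCommGroup V] [InnerProductSpace ℝ V]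
    [FiniteDimensional ℝ V] [MeasurableSpace V] [BorelSpace V] {c : ℝ} (hc : 0 < c) :
    ∫⁻ v : V, ENNReal.ofReal (exp (-(c * ‖v‖ ^ 2)))
      = ENNReal.ofReal ((π / c) ^ (Module.finrank ℝ V / 2 : ℝ)) := by
  refine lintegral_ofReal_eq_of_integral_eq (ae_of_all _ fun _ => exp_nonneg _) ?_ (by positivity)
  simpa only [neg_mul] using GaussianFourier.integral_rexp_neg_mul_sq_norm (V := V) hc

lemma norm_sub_sq_mul_add_norm_sq_mul {E : Type*} [NormedAddCommGroup E] [InnerProductSpace ℝ E]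
    (u v : E) {t s : ℝ} (hts : t + s ≠ 0) :
    t * ‖u - v‖ ^ 2 + s * ‖v‖ ^ 2
      = (t + s) * ‖v - (t / (t + s)) • u‖ ^ 2 + t * s / (t + s) * ‖u‖ ^ 2 := by
  rw [norm_sub_sq_real, norm_sub_sq_real, norm_smul, real_inner_smul_right, real_inner_comm,
    Real.norm_eq_abs, mul_pow, sq_abs]
  field_simp
  ring

lemma lintegral_exp_neg_mul_norm_sub_sq_mul_exp_neg_mul_norm_sq {V : Type*}
    [NormedAddCommGroup V] [InnerProductSpace ℝ V] [FiniteDimensional ℝ V] [MeasurableSpace V]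
    [BorelSpace V] (u : V) {t s : ℝ} (ht : 0 < t) (hs : 0 < s) :
    ∫⁻ v : V, ENNReal.ofReal (exp (-(t * ‖u - v‖ ^ 2)) * exp (-(s * ‖v‖ ^ 2)))
      = ENNReal.ofReal (π ^ (Module.finrank ℝ V / 2 : ℝ) *
          ((t + s) ^ (-(Module.finrank ℝ V / 2 : ℝ)) * exp (-(t * s / (t + s) * ‖u‖ ^ 2)))) := by
  have hts : 0 < t + s := add_pos ht hs
  have hsplit : ∀ v : V, exp (-(t * ‖u - v‖ ^ 2)) * exp (-(s * ‖v‖ ^ 2))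
      = exp (-(t * s / (t + s) * ‖u‖ ^ 2)) * exp (-((t + s) * ‖v - (t / (t + s)) • u‖ ^ 2)) := by
    intro v
    rw [← exp_add, ← exp_add, ← neg_add, ← neg_add, norm_sub_sq_mul_add_norm_sq_mul u v hts.ne',
      add_comm]
  simp_rw [hsplit]
  rw [lintegral_ofReal_const_mul _ (exp_nonneg _),
    lintegral_sub_right_eq_self (fun v => ENNReal.ofReal (exp (-((t + s) * ‖v‖ ^ 2)))),
    lintegral_exp_neg_mul_norm_sq hts, ← ENNReal.ofReal_mul (exp_nonneg _),
    div_rpow pi_pos.le hts.le, rpow_neg hts.le]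
  congr 1; ring

lemma ofReal_Gamma_mul_Gamma_mul_lintegral_norm_sub_rpow_mul_norm_rpow {V : Type*}
    [NormedAddCommGroup V] [InnerProductSpace ℝ V] [FiniteDimensional ℝ V] [MeasurableSpace V]
    [BorelSpace V] {α β : ℝ} (hα : 0 < α) (hβ : 0 < β) (u : V) (hu : ‖u‖ = 1) :
    ENNReal.ofReal (Gamma α * Gamma β) *
        ∫⁻ v : V, ENNReal.ofReal (‖u - v‖ ^ (-(2 * α)) * ‖v‖ ^ (-(2 * β)))
      = ENNReal.ofReal (π ^ (Module.finrank ℝ V / 2 : ℝ)) * ∫⁻ t in Ioi 0, ∫⁻ s in Ioi 0,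
          ENNReal.ofReal (t ^ (α - 1) * s ^ (β - 1) *
            ((t + s) ^ (-(Module.finrank ℝ V / 2 : ℝ)) * exp (-(t * s / (t + s))))) := by
  have : Nontrivial V := nontrivial_of_ne u 0 (by rintro rfl; simp at hu)
  have hsq_rpow : ∀ (w : V) (c : ℝ), (‖w‖ ^ 2) ^ (-c) = ‖w‖ ^ (-(2 * c)) := by
    intro w c
    rw [← rpow_natCast, ← rpow_mul (norm_nonneg w)]
    congr 1; push_cast; ring
  have hsubord : ∀ᵐ v : V, ENNReal.ofReal (Gamma α * Gamma β) *
      ENNReal.ofReal (‖u - v‖ ^ (-(2 * α)) * ‖v‖ ^ (-(2 * β)))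
      = ∫⁻ t in Ioi 0, ∫⁻ s in Ioi 0, ENNReal.ofReal (t ^ (α - 1) * s ^ (β - 1) *
          (exp (-(t * ‖u - v‖ ^ 2)) * exp (-(s * ‖v‖ ^ 2)))) := by
    -- at `v = 0` and `v = u` the left side is `0`, since `0 ^ (-c) = 0`, but the right side is `∞`
    filter_upwards [compl_mem_ae_iff.mpr (measure_singleton (0 : V)),
      compl_mem_ae_iff.mpr (measure_singleton u)] with v (hv : v ≠ 0) (hvu : v ≠ u)
    rw [lintegral_Ioi_lintegral_Ioi_rpow_mul_exp_neg_mul_mul hα hβ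
      (pow_pos (norm_pos_iff.2 (sub_ne_zero.2 hvu.symm)) 2) (pow_pos (norm_pos_iff.2 hv) 2),
      hsq_rpow, hsq_rpow, ← ENNReal.ofReal_mul (by positivity)]
    congr 1; ring
  calc _ = ∫⁻ v : V, ∫⁻ t in Ioi 0, ∫⁻ s in Ioi 0, ENNReal.ofReal (t ^ (α - 1) * s ^ (β - 1) *
          (exp (-(t * ‖u - v‖ ^ 2)) * exp (-(s * ‖v‖ ^ 2)))) := by
        rw [← lintegral_const_mul' _ _ ENNReal.ofReal_ne_top]
        exact lintegral_congr_ae hsubord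
    _ = ∫⁻ t in Ioi 0, ∫⁻ s in Ioi 0, ∫⁻ v : V, ENNReal.ofReal (t ^ (α - 1) * s ^ (β - 1) *
          (exp (-(t * ‖u - v‖ ^ 2)) * exp (-(s * ‖v‖ ^ 2)))) := by
        rw [lintegral_lintegral_swap]
        · exact lintegral_congr fun t =>
            lintegral_lintegral_swap (by apply Measurable.aemeasurable; fun_prop)
        · apply Measurable.aemeasurable
          apply Measurable.lintegral_prod_right (f := fun (p : V × ℝ) (s : ℝ) =>
            ENNReal.ofReal (p.2 ^ (α - 1) * s ^ (β - 1) *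
              (exp (-(p.2 * ‖u - p.1‖ ^ 2)) * exp (-(s * ‖p.1‖ ^ 2)))))
          fun_prop
    _ = _ := by
        simp_rw [← lintegral_const_mul' _ _ ENNReal.ofReal_ne_top]
        refine setLIntegral_congr_fun measurableSet_Ioi fun t (ht : 0 < t) => ?_
        refine setLIntegral_congr_fun measurableSet_Ioi fun s (hs : 0 < s) => ?_
        rw [lintegral_ofReal_const_mul _ (by positivity),
          lintegral_exp_neg_mul_norm_sub_sq_mul_exp_neg_mul_norm_sq u ht hs, hu, one_pow, mul_one,
          ← ENNReal.ofReal_mul (by positivity), ← ENNReal.ofReal_mul (by positivity)]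
        congr 1; ring

theorem lintegral_norm_sub_rpow_mul_norm_rpow {V : Type*} [NormedAddCommGroup V]
    [InnerProductSpace ℝ V] [FiniteDimensional ℝ V] [MeasurableSpace V] [BorelSpace V]
    {a b : ℝ} (ha : 0 < a) (hb : 0 < b) (hab : a + b < Module.finrank ℝ V) (u : V)
    (hu : ‖u‖ = 1) :
    ∫⁻ v : V, ENNReal.ofReal (‖u - v‖ ^ (a - Module.finrank ℝ V) * ‖v‖ ^ (b - Module.finrank ℝ V))
      = ENNReal.ofReal (π ^ (Module.finrank ℝ V / 2 : ℝ) * Gamma (a / 2) * Gamma (b / 2)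
          * Gamma ((Module.finrank ℝ V - a - b) / 2)
          / (Gamma ((Module.finrank ℝ V - a) / 2) * Gamma ((Module.finrank ℝ V - b) / 2)
            * Gamma ((a + b) / 2))) := by
  have hα : 0 < (Module.finrank ℝ V - a) / 2 := by linarith
  have hβ : 0 < (Module.finrank ℝ V - b) / 2 := by linarith
  have hsubord := ofReal_Gamma_mul_Gamma_mul_lintegral_norm_sub_rpow_mul_norm_rpow hα hβ u hu
  generalize (Module.finrank ℝ V : ℝ) = n at hab hα hβ hsubord ⊢
  have hkernel := lintegral_Ioi_lintegral_Ioi_rpow_mul_rpow_mul_exp_neg_mul_div_add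
    (α := (n - a) / 2) (β := (n - b) / 2) (D := n / 2) (by linarith) (by linarith) (by linarith)
  rw [show (n - a) / 2 + (n - b) / 2 - n / 2 = (n - a - b) / 2 by ring,
    show n / 2 - (n - a) / 2 = a / 2 by ring, show n / 2 - (n - b) / 2 = b / 2 by ring,
    show a / 2 + b / 2 = (a + b) / 2 by ring] at hkernel
  rw [hkernel, ← ENNReal.ofReal_mul (by positivity), show -(2 * ((n - a) / 2)) = a - n by ring,
    show -(2 * ((n - b) / 2)) = b - n by ring] at hsubord
  have hΓ : 0 < Gamma ((n - a) / 2) * Gamma ((n - b) / 2) :=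
    mul_pos (Gamma_pos_of_pos hα) (Gamma_pos_of_pos hβ)
  rw [show π ^ (n / 2) * Gamma (a / 2) * Gamma (b / 2) * Gamma ((n - a - b) / 2)
      / (Gamma ((n - a) / 2) * Gamma ((n - b) / 2) * Gamma ((a + b) / 2))
      = π ^ (n / 2) * (Gamma ((n - a - b) / 2) * (Gamma (a / 2) * Gamma (b / 2)
          / Gamma ((a + b) / 2))) / (Gamma ((n - a) / 2) * Gamma ((n - b) / 2)) by ring,
    ENNReal.ofReal_div_of_pos hΓ, ENNReal.eq_div_iff (by simpa using hΓ) ENNReal.ofReal_ne_top,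
    hsubord]

theorem riesz_convolution_identity_general (d : ℕ) (a b : ℝ)
    (ha : 0 < a) (hb : 0 < b) (hab : a + b < d)
    (u : EuclideanSpace ℝ (Fin d)) (hu : ‖u‖ = 1) :
    Integrable (fun v : EuclideanSpace ℝ (Fin d) =>
        ‖u - v‖ ^ (a - d) * ‖v‖ ^ (b - d))
    ∧ (∫ v : EuclideanSpace ℝ (Fin d), ‖u - v‖ ^ (a - d) * ‖v‖ ^ (b - d))
        = Real.pi ^ ((d : ℝ) / 2) * Real.Gamma (a / 2) * Real.Gamma (b / 2)
            * Real.Gamma (((d : ℝ) - a - b) / 2)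
          / (Real.Gamma (((d : ℝ) - a) / 2) * Real.Gamma (((d : ℝ) - b) / 2)
              * Real.Gamma ((a + b) / 2)) := by
  have hlint := lintegral_norm_sub_rpow_mul_norm_rpow ha hb (by simpa using hab) u hu
  rw [finrank_euclideanSpace_fin] at hlint
  have := Gamma_pos_of_pos (half_pos ha)
  have := Gamma_pos_of_pos (half_pos hb)
  have := Gamma_pos_of_pos (half_pos (add_pos ha hb))
  have := Gamma_pos_of_pos (by linarith : 0 < ((d : ℝ) - a - b) / 2)
  have := Gamma_pos_of_pos (by linarith : 0 < ((d : ℝ) - a) / 2)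
  have := Gamma_pos_of_pos (by linarith : 0 < ((d : ℝ) - b) / 2)
  exact integrable_and_integral_eq_of_lintegral_ofReal_eq (ae_of_all _ fun v => by positivity)
    (by fun_prop) hlint (by positivity)

/-- The beta-type convolution identity: for `0 < a, b`, `a + b < d`, `a < d`, `b < d`,
and a unit vector `u ∈ ℝ^d`, the function `v ↦ |u-v|^{a-d}|v|^{b-d}` is integrable on
`ℝ^d` with integral
`π^{d/2} Γ(a/2)Γ(b/2)Γ((d-a-b)/2) / (Γ((d-a)/2)Γ((d-b)/2)Γ((a+b)/2))`. -/
theorem riesz_convolution_identity (d : ℕ) (hd : 1 ≤ d) (a b : ℝ)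
    (ha : 0 < a) (hb : 0 < b) (hab : a + b < d) (ha' : a < d) (hb' : b < d)
    (u : EuclideanSpace ℝ (Fin d)) (hu : ‖u‖ = 1) :
    Integrable (fun v : EuclideanSpace ℝ (Fin d) =>
        ‖u - v‖ ^ (a - d) * ‖v‖ ^ (b - d))
    ∧ (∫ v : EuclideanSpace ℝ (Fin d), ‖u - v‖ ^ (a - d) * ‖v‖ ^ (b - d))
        = Real.pi ^ ((d : ℝ) / 2) * Real.Gamma (a / 2) * Real.Gamma (b / 2)
            * Real.Gamma (((d : ℝ) - a - b) / 2)
          / (Real.Gamma (((d : ℝ) - a) / 2) * Real.Gamma (((d : ℝ) - b) / 2)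
              * Real.Gamma ((a + b) / 2)) :=
  riesz_convolution_identity_general d a b ha hb hab u hu
end
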